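/- arXiv:1606.00353 — 11 statements merged into one kernel-verified Lean document; each statement's English description precedes it below -/
import Mathlib

section
/- Let (X, *, f) be an f-quandle and let φ : X → X be a bijective f-quandle morphism (i.e. φ(a*b) = φ(a)*φ(b) for all a, b ∈ X and φ ∘ f = f ∘ φ). Define a *_φ b = φ(a * b) and f_φ = φ ∘ f. Then (X, *_φ, f_φ) is an f-quandle. -/
/-- Twisting an f-quandle `(X, *, f)` by a bijective f-quandle morphism `φ`
(via `a *_φ b = φ (a * b)` and `f_φ = φ ∘ f`) yields again an f-quandle. -/
theorem fQuandle_twist_is_fQuandle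
    {X : Type*} (op : X → X → X) (f : X → X)
    (h1 : ∀ x y z : X, op (op x y) (f z) = op (op x z) (op y z))
    (h2 : ∀ x y : X, ∃! z : X, op z y = f x)
    (h3 : ∀ x : X, op x x = f x)
    (φ : X → X) (hbij : Function.Bijective φ)
    (hom : ∀ a b : X, φ (op a b) = op (φ a) (φ b))
    (hcomm : ∀ x : X, φ (f x) = f (φ x)) :
    (∀ x y z : X, φ (op (φ (op x y)) (φ (f z))) = φ (op (φ (op x z)) (φ (op y z)))) ∧
      (∀ x y : X, ∃! z : X, φ (op z y) = φ (f x)) ∧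
      (∀ x : X, φ (op x x) = φ (f x)) := by
  refine ⟨fun x y z => ?_, fun x y => ?_, fun x => congrArg φ (h3 x)⟩
  · rw [← hom, ← hom, h1]
  · obtain ⟨z, hz, hu⟩ := h2 x y
    exact ⟨z, congrArg φ hz, fun w hw => hu w (hbij.1 hw)⟩
end

section
/- Let (X, *, f) be an f-quandle and let φ : X → X be an f-quandle morphism. If the twisted triple (X, *_φ, f_φ), where a *_φ b = φ(a * b) and f_φ = φ ∘ f, is again an f-quandle, then φ is injective; in particular, if X is finite then φ is an automorphism of (X, *, f). -/
/-- If `(X, *, f)` is an f-quandle, `φ` is an f-quandle morphism, and the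
twisted triple `(X, *_φ, f_φ)` (where `a *_φ b = φ (a * b)`, `f_φ = φ ∘ f`) is again an
f-quandle, then `φ` is injective; in particular if `X` is finite then `φ` is an
automorphism (a bijective morphism) of `(X, *, f)`. -/
theorem fQuandle_twist_forces_injective
    {X : Type*} (op : X → X → X) (f : X → X)
    (h1 : ∀ x y z : X, op (op x y) (f z) = op (op x z) (op y z))
    (h2 : ∀ x y : X, ∃! z : X, op z y = f x)
    (h3 : ∀ x : X, op x x = f x)
    (φ : X → X)
    (hom : ∀ a b : X, φ (op a b) = op (φ a) (φ b))
    (hcomm : ∀ x : X, φ (f x) = f (φ x))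
    (t1 : ∀ x y z : X, φ (op (φ (op x y)) (φ (f z))) = φ (op (φ (op x z)) (φ (op y z))))
    (t2 : ∀ x y : X, ∃! z : X, φ (op z y) = φ (f x))
    (t3 : ∀ x : X, φ (op x x) = φ (f x)) :
    Function.Injective φ ∧ (Finite X → Function.Bijective φ) := by
  have hinj : Function.Injective φ := by
    intro a b hab
    obtain ⟨z, hz, huniq⟩ := t2 a a
    have ha : φ (op a a) = φ (f a) := t3 a
    have hb : φ (op b a) = φ (f a) := by
      rw [hom, ← hab, ← hom, ha]
    exact ((huniq a ha).trans (huniq b hb).symm)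
  exact ⟨hinj, fun _ => Finite.injective_iff_bijective.mp hinj⟩
end

section
/- Let G be a group and f : G → G a group endomorphism. Then the operation x * y = y⁻¹ · x · f(y) together with the map f makes (G, *, f) an f-quandle. -/
/-- The operation `x * y = y⁻¹ · x · f(y)` on a group `G` twisted by an endomorphism `f`. -/
def fConjOp {G : Type*} [Group G] (f : G →* G) (x y : G) : G := y⁻¹ * x * f y

/-- For a group `G` and a group endomorphism `f`, the operation
`x * y = y⁻¹ · x · f(y)` together with `f` makes `(G, *, f)` an f-quandle. -/
theorem group_fConj_is_fQuandle {G : Type*} [Group G] (f : G →* G) :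
    (∀ x y z : G, fConjOp f (fConjOp f x y) (f z) = fConjOp f (fConjOp f x z) (fConjOp f y z)) ∧
      (∀ x y : G, ∃! z : G, fConjOp f z y = f x) ∧
      (∀ x : G, fConjOp f x x = f x) := by
  refine ⟨fun x y z => ?_, fun x y => ?_, fun x => ?_⟩
  · simp only [fConjOp, map_mul, map_inv]
    group
  · refine ⟨y * f x * (f y)⁻¹, ?_, ?_⟩
    · simp [fConjOp]; group
    · intro z hz
      simp only [fConjOp] at hz
      have : z = y * f x * (f y)⁻¹ := by
        rw [← hz]; group
      exact this
  · simp [fConjOp]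
end

section
/- Let n ≥ 2, let a be a unit of ℤ/nℤ and b ∈ ℤ/nℤ, and define f(x) = a·x + b and x * y = 2·a·y − a·x + b on ℤ/nℤ. Then (ℤ/nℤ, *, f) is an f-quandle (the f-Dihedral quandle). -/
/-- The f-Dihedral operation `x * y = 2·a·y − a·x + b` on `ℤ/nℤ`. -/
def fDihedralOp {n : ℕ} (a b x y : ZMod n) : ZMod n := 2 * a * y - a * x + b

/-- The structure map `f(x) = a·x + b` of the f-Dihedral quandle. -/
def fDihedralMap {n : ℕ} (a b x : ZMod n) : ZMod n := a * x + b

/-- For `n ≥ 2`, `a` a unit of `ℤ/nℤ` and `b ∈ ℤ/nℤ`, the operation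
`x * y = 2·a·y − a·x + b` together with `f(x) = a·x + b` makes `ℤ/nℤ` an f-quandle
(the f-Dihedral quandle). -/
theorem fDihedral_is_fQuandle (n : ℕ) (hn : 2 ≤ n) (a b : ZMod n) (ha : IsUnit a) :
    (∀ x y z : ZMod n,
        fDihedralOp a b (fDihedralOp a b x y) (fDihedralMap a b z) =
          fDihedralOp a b (fDihedralOp a b x z) (fDihedralOp a b y z)) ∧
      (∀ x y : ZMod n, ∃! z : ZMod n, fDihedralOp a b z y = fDihedralMap a b x) ∧
      (∀ x : ZMod n, fDihedralOp a b x x = fDihedralMap a b x) := by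
  refine ⟨fun x y z => by simp only [fDihedralOp, fDihedralMap]; ring,
    fun x y => ⟨2 * y - x, by simp only [fDihedralOp, fDihedralMap]; ring,
      fun z hz => ?_⟩,
    fun x => by simp only [fDihedralOp, fDihedralMap]; ring⟩
  have h : a * (2 * y - x) = a * z := by
    simp only [fDihedralOp, fDihedralMap] at hz
    linear_combination hz
  exact (ha.mul_left_cancel h).symm
end

section
/- Let (X, *, f) be a finite f-quandle whose structure map f is constant, i.e. there exists e ∈ X with f(b) = e for all b ∈ X. Then for every a ∈ X the left translation b ↦ a * b is a bijection of X; together with the bijectivity of the right translations, the Cayley table of (X, *) is a Latin square. -/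
/-- If `(X, *, f)` is a finite f-quandle whose structure map `f` is constant
(`f b = e` for all `b`), then every left translation `b ↦ a * b` is a bijection of `X`;
together with the bijectivity of the right translations `x ↦ x * a`, the Cayley table of
`(X, *)` is a Latin square. -/
theorem constant_f_gives_LatinSquare
    {X : Type*} [Finite X] (op : X → X → X) (f : X → X)
    (h1 : ∀ x y z : X, op (op x y) (f z) = op (op x z) (op y z))
    (h2 : ∀ x y : X, ∃! z : X, op z y = f x)
    (h3 : ∀ x : X, op x x = f x)
    (e : X) (hf : ∀ b : X, f b = e) :
    (∀ a : X, Function.Bijective (fun b => op a b)) ∧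
      (∀ a : X, Function.Bijective (fun x => op x a)) := by
  have hfe : ∀ x : X, op x x = e := fun x => by rw [h3, hf]
  have hee : op e e = e := hfe e
  -- right translations are injective
  have rightInj : ∀ a : X, Function.Injective (fun x => op x a) := by
    intro a b c h
    simp only at h
    have key : op (op b c) e = e := by
      have H := h1 b c a
      rw [hf] at H
      rw [H, h, hfe]
    obtain ⟨z, hz, hzu⟩ := h2 e e
    simp only [hf] at hz hzu
    have hbc : op b c = e := (hzu _ key).trans (hzu e hee).symm
    obtain ⟨w, hw, hwu⟩ := h2 e c
    simp only [hf] at hw hwu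
    exact (hwu b hbc).trans (hwu c (hfe c)).symm
  have rightBij : ∀ a : X, Function.Bijective (fun x => op x a) :=
    fun a => Finite.injective_iff_bijective.mp (rightInj a)
  -- key identity: e * (y * a) = (a * y) * e
  have claim1 : ∀ a y : X, op e (op y a) = op (op a y) e := by
    intro a y
    have H := h1 a y a
    rw [hf, hfe] at H
    exact H.symm
  -- left translations are surjective
  have leftSurj : ∀ a : X, Function.Surjective (fun b => op a b) := by
    intro a t
    obtain ⟨s, hs⟩ := (rightBij a).2 t
    simp only at hs
    obtain ⟨y, hy⟩ := (rightBij a).2 (op a s)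
    simp only at hy
    refine ⟨y, ?_⟩
    have H1 : op e (op a s) = op (op s a) e := claim1 s a
    have H2 : op e (op y a) = op (op a y) e := claim1 a y
    rw [hy, H1, hs] at H2
    exact rightInj e H2.symm
  exact ⟨fun a => Finite.surjective_iff_bijective.mp (leftSurj a), rightBij⟩
end

section
/- Let (X, *, f) be an f-quandle such that f is a bijection. Define a ▷ b = f⁻¹(a * b). Then (X, ▷) is a quandle; that is: a ▷ a = a for all a; for all b, c there is a unique a with a ▷ b = c; and (a ▷ b) ▷ c = (a ▷ c) ▷ (b ▷ c) for all a, b, c. In particular (X, *, f) is the twist by f of an ordinary quandle. -/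
/-- If `(X, *, f)` is an f-quandle with `f` a bijection (with two-sided
inverse `g`), then the operation `a ▷ b = f⁻¹(a * b) = g (a * b)` makes `X` a quandle:
`a ▷ a = a`; for all `b, c` there is a unique `a` with `a ▷ b = c`; and
`(a ▷ b) ▷ c = (a ▷ c) ▷ (b ▷ c)`. In particular `(X, *, f)` is the twist by `f` of an
ordinary quandle. -/
theorem fQuandle_bijective_f_is_twist_of_quandle
    {X : Type*} (op : X → X → X) (f : X → X)
    (h1 : ∀ x y z : X, op (op x y) (f z) = op (op x z) (op y z))
    (h2 : ∀ x y : X, ∃! z : X, op z y = f x)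
    (h3 : ∀ x : X, op x x = f x)
    (g : X → X) (hgf : ∀ x : X, g (f x) = x) (hfg : ∀ x : X, f (g x) = x) :
    (∀ a : X, g (op a a) = a) ∧
      (∀ b c : X, ∃! a : X, g (op a b) = c) ∧
      (∀ a b c : X,
        g (op (g (op a b)) c) = g (op (g (op a c)) (g (op b c)))) := by
  have hfinj : ∀ a b : X, f a = f b → a = b := fun a b h => by
    rw [← hgf a, h, hgf]
  have hom : ∀ x y : X, f (op x y) = op (f x) (f y) := by
    intro x y
    have h := h1 x x y
    rw [h3 x, h3 (op x y)] at h
    exact h.symm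
  refine ⟨fun a => by rw [h3, hgf], fun b c => ?_, fun a b c => ?_⟩
  · obtain ⟨z, hz, huniq⟩ := h2 c b
    refine ⟨z, show g (op z b) = c by rw [hz, hgf], fun y hy => huniq y ?_⟩
    have : f (g (op y b)) = f c := by rw [hy]
    rw [hfg] at this
    exact this
  · congr 1
    apply hfinj
    rw [hom, hom, hfg, hfg, hfg, h1]
end

section
/- Let (X, *, f) be an f-quandle with f injective, and let x, x', y ∈ X satisfy x * y = f(x') and y * x = f(y). Then y * x' = f(y), and the right translations by x and by x' coincide: z * x = z * x' for all z ∈ X. -/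
/-- In an f-quandle with `f` injective, if `x * y = f x'` and
`y * x = f y`, then `y * x' = f y` and the right translations by `x` and `x'`
coincide: `z * x = z * x'` for all `z`. -/
theorem fQuandle_sim_relation_properties
    {X : Type*} (op : X → X → X) (f : X → X)
    (h1 : ∀ x y z : X, op (op x y) (f z) = op (op x z) (op y z))
    (h2 : ∀ x y : X, ∃! z : X, op z y = f x)
    (h3 : ∀ x : X, op x x = f x)
    (hf : Function.Injective f)
    (x x' y : X) (hxy : op x y = f x') (hyx : op y x = f y) :
    op y x' = f y ∧ ∀ z : X, op z x = op z x' := by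
  -- f is a homomorphism: f (a*b) = f a * f b
  have hom : ∀ a b : X, f (op a b) = op (f a) (f b) := by
    intro a b
    have h := h1 a a b
    rw [h3 a, h3 (op a b)] at h
    exact h.symm
  -- op (f y) (f x') = f (f y)
  have key : op (f y) (f x') = f (f y) := by
    have h := h1 y x y
    rw [hyx, h3 y, hxy, h3 (f y)] at h
    exact h.symm
  -- first part: y * x' = f y
  have hyx' : op y x' = f y := by
    apply hf
    rw [hom y x', key]
  exact ⟨hyx', fun z => by
    obtain ⟨w, hw, -⟩ := h2 z y
    -- (w*y)*(f x) = (w*x)*(y*x) = (w*x)*(f y)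
    have hA : op (op w y) (f x) = op (op w x) (f y) := by
      have h := h1 w y x
      rw [hyx] at h; exact h
    -- (w*x)*(f y) = (w*y)*(x*y) = (w*y)*(f x')
    have hB : op (op w x) (f y) = op (op w y) (f x') := by
      have h := h1 w x y
      rw [hxy] at h; exact h
    apply hf
    rw [hom z x, hom z x', ← hw, hA, hB]⟩
end

section
/- Let (X, *, f) be an f-quandle and let x, x', y ∈ X satisfy x * y = f(x') and y * x = f(y). Then for every z ∈ X: (x * z) * (y * z) = f(x' * z) and (y * z) * (x * z) = f(y * z). In other words, the relation x ∼ x' (witnessed by y) implies x * z ∼ x' * z (witnessed by y * z), so the relation ∼ is compatible with the f-quandle operation. -/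
/-- In an f-quandle, if `x * y = f x'` and `y * x = f y`, then for all `z`
one has `(x * z) * (y * z) = f (x' * z)` and `(y * z) * (x * z) = f (y * z)`; i.e. the
relation `x ∼ x'` (witnessed by `y`) implies `x * z ∼ x' * z` (witnessed by `y * z`). -/
theorem fQuandle_sim_relation_compatible
    {X : Type*} (op : X → X → X) (f : X → X)
    (h1 : ∀ x y z : X, op (op x y) (f z) = op (op x z) (op y z))
    (h2 : ∀ x y : X, ∃! z : X, op z y = f x)
    (h3 : ∀ x : X, op x x = f x)
    (x x' y : X) (hxy : op x y = f x') (hyx : op y x = f y) :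
    ∀ z : X, op (op x z) (op y z) = f (op x' z) ∧ op (op y z) (op x z) = f (op y z) := by
  have hf : ∀ a z : X, op (f a) (f z) = f (op a z) := by
    intro a z
    calc op (f a) (f z) = op (op a a) (f z) := by rw [h3]
    _ = op (op a z) (op a z) := h1 a a z
    _ = f (op a z) := h3 _
  intro z
  constructor
  · calc op (op x z) (op y z) = op (op x y) (f z) := (h1 x y z).symm
    _ = op (f x') (f z) := by rw [hxy]
    _ = f (op x' z) := hf x' z
  · calc op (op y z) (op x z) = op (op y x) (f z) := (h1 y x z).symm
    _ = op (f y) (f z) := by rw [hyx]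
    _ = f (op y z) := hf y z
end

section
/- Let (X, *, f) be an f-rack in which every right translation R_z(w) = w * z is a bijection of X. If x, y ∈ X satisfy R_{x*y} = R_{f(x)} (i.e. w * (x * y) = w * f(x) for all w), then R_{y*x} = R_{f(y)} (i.e. w * (y * x) = w * f(y) for all w). Consequently the set of right translations, with operation R_x *_R R_y = R_{x*y} and map f_R(R_x) = R_{f(x)}, is an f-crossed set. -/
/-- Let `(X, *, f)` be an f-rack in which every right translation
`R_z : w ↦ w * z` is a bijection. If `x, y` satisfy `R_{x*y} = R_{f x}`
(`w * (x * y) = w * f x` for all `w`), then `R_{y*x} = R_{f y}`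
(`w * (y * x) = w * f y` for all `w`). Consequently the set of right translations,
with `R_x *_R R_y = R_{x*y}` and `f_R (R_x) = R_{f x}`, is an f-crossed set. -/
theorem fRack_rightTranslations_crossed
    {X : Type*} (op : X → X → X) (f : X → X)
    (h1 : ∀ x y z : X, op (op x y) (f z) = op (op x z) (op y z))
    (h2 : ∀ x y : X, ∃! z : X, op z y = f x)
    (hbij : ∀ z : X, Function.Bijective (fun w => op w z))
    (x y : X) (hxy : ∀ w : X, op w (op x y) = op w (f x)) :
    ∀ w : X, op w (op y x) = op w (f y) := by
  intro w
  obtain ⟨u, hu⟩ := (hbij x).2 w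
  simp only at hu
  subst hu
  calc op (op u x) (op y x) = op (op u y) (f x) := (h1 u y x).symm
    _ = op (op u y) (op x y) := (hxy _).symm
    _ = op (op u x) (f y) := (h1 u x y).symm
end

section
/- Let (X, *, f) be an f-quandle, A a nonempty set, g : A → A a map, and α : X × X → Fun(A × A, A) a function satisfying: (1) α_{x,x}(a, a) = g(a) for all x ∈ X, a ∈ A; (2) for all x, y ∈ X and b ∈ A, the map a ↦ α_{x,y}(a, b) is a bijection of A; (3) α_{x*y, f(z)}(α_{x,y}(a, b), g(c)) = α_{x*z, y*z}(α_{x,z}(a, c), α_{y,z}(b, c)) for all x, y, z ∈ X and a, b, c ∈ A. Then X × A with the operation (x, a) • (y, b) = (x * y, α_{x,y}(a, b)) and the map F(x, a) = (f(x), g(a)) is an f-quandle, called the extension of X by the dynamical cocycle α. -/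
/-- The product operation `(x, a) • (y, b) = (x * y, α_{x,y}(a, b))` on `X × A` defined
from a dynamical cocycle `α`. -/
def extOp {X A : Type*} (op : X → X → X) (α : X → X → A → A → A) (p q : X × A) : X × A :=
  (op p.1 q.1, α p.1 q.1 p.2 q.2)

/-- Extension of an f-quandle by a dynamical cocycle. If `(X, *, f)` is an
f-quandle, `A` a nonempty set, `g : A → A`, and `α : X × X → Fun(A × A, A)` satisfies
(1) `α_{x,x}(a, a) = g a`, (2) `a ↦ α_{x,y}(a, b)` is a bijection, and
(3) `α_{x*y, f z}(α_{x,y}(a, b), g c) = α_{x*z, y*z}(α_{x,z}(a, c), α_{y,z}(b, c))`,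
then `X × A` with `(x, a) • (y, b) = (x * y, α_{x,y}(a, b))` and
`F (x, a) = (f x, g a)` is an f-quandle. -/
theorem dynamical_cocycle_extension_is_fQuandle
    {X A : Type*} [Nonempty A] (op : X → X → X) (f : X → X)
    (h1 : ∀ x y z : X, op (op x y) (f z) = op (op x z) (op y z))
    (h2 : ∀ x y : X, ∃! z : X, op z y = f x)
    (h3 : ∀ x : X, op x x = f x)
    (g : A → A) (α : X → X → A → A → A)
    (c1 : ∀ (x : X) (a : A), α x x a a = g a)
    (c2 : ∀ (x y : X) (b : A), Function.Bijective (fun a => α x y a b))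
    (c3 : ∀ (x y z : X) (a b c : A),
      α (op x y) (f z) (α x y a b) (g c) = α (op x z) (op y z) (α x z a c) (α y z b c)) :
    (∀ p q r : X × A,
        extOp op α (extOp op α p q) (f r.1, g r.2) =
          extOp op α (extOp op α p r) (extOp op α q r)) ∧
      (∀ p q : X × A, ∃! r : X × A, extOp op α r q = (f p.1, g p.2)) ∧
      (∀ p : X × A, extOp op α p p = (f p.1, g p.2)) := by
  refine ⟨?_, ?_, ?_⟩
  · intro p q r
    simp only [extOp, Prod.mk.injEq]
    exact ⟨h1 _ _ _, c3 _ _ _ _ _ _⟩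
  · intro p q
    obtain ⟨z, hz, hzu⟩ := h2 p.1 q.1
    obtain ⟨a, ha⟩ := (c2 z q.1 q.2).surjective (g p.2)
    refine ⟨(z, a), by simp [extOp, hz, ha], ?_⟩
    rintro ⟨z', a'⟩ h
    simp only [extOp, Prod.mk.injEq] at h
    obtain rfl : z' = z := hzu z' h.1
    obtain rfl : a' = a := (c2 z' q.1 q.2).injective (h.2.trans ha.symm)
    rfl
  · intro p
    simp [extOp, h3, c1]
end

section
/- Let (X, *, f) be an f-quandle, A an abelian group, and for n ≥ 1 let C^n(X, A) be the abelian group of functions X^n → A. Define δ^n : C^n(X, A) → C^{n+1}(X, A) by (δ^n φ)(x_1, …, x_{n+1}) = Σ_{i=2}^{n+1} (−1)^i [ φ(x_1, …, x_{i−1}, x_{i+1}, …, x_{n+1}) − φ(x_1 * x_i, x_2 * x_i, …, x_{i−1} * x_i, f(x_{i+1}), …, f(x_{n+1})) ]. Then δ^{n+1} ∘ δ^n = 0 for all n ≥ 1, so (C^•(X, A), δ^•) is a cochain complex. -/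
/-!
Write `∂⁰ᵢ` for deleting the `i`-th entry of a tuple and `∂¹ᵢ` (`fQuandleFace`) for deleting it
while acting by `· * xᵢ` on the earlier entries and by `f` on the later ones, so that
`δφ = Σᵢ (-1)ⁱ (φ ∘ ∂⁰ᵢ₊₁ - φ ∘ ∂¹ᵢ₊₁)`. For `j < i` these faces satisfy the cubical identities
`∂ᵉⱼ ∘ ∂ᵉ'ᵢ = ∂ᵉ'ᵢ₋₁ ∘ ∂ᵉⱼ`. Only `∂¹∂¹` uses the f-quandle axioms: it needs
`(x * y) * f z = (x * z) * (y * z)` and `f (x * y) = f x * f y`, the latter being the former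
with `x = y` rewritten by `x * x = f x`. Hence the terms of `δδφ` cancel in pairs
`(i, j) ↔ (j, i - 1)`, which carry opposite signs.
-/

/-- The f-quandle differential `δ^n : C^n(X, A) → C^{n+1}(X, A)` (with `η = id`, `τ = 0`):
`(δ^n φ)(x_1, …, x_{n+1}) = Σ_{i=2}^{n+1} (−1)^i [ φ(x_1, …, x̂_i, …, x_{n+1})
  − φ(x_1 * x_i, …, x_{i−1} * x_i, f x_{i+1}, …, f x_{n+1}) ]`
(indices in the formula are 1-based; here tuples are 0-based, so the sum runs over the
indices `i : Fin (n+1)` with `1 ≤ i` and carries the sign `(−1)^{i+1}`). -/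
def fQuandleDelta {X A : Type*} [AddCommGroup A] (op : X → X → X) (f : X → X) (n : ℕ)
    (φ : (Fin n → X) → A) : (Fin (n + 1) → X) → A := fun x =>
  ∑ i : Fin (n + 1),
    if 1 ≤ (i : ℕ) then
      ((-1 : ℤ) ^ ((i : ℕ) + 1)) •
        (φ (i.removeNth x) -
          φ (fun j : Fin n =>
            if (j : ℕ) < (i : ℕ) then op (x (Fin.castSucc j)) (x i) else f (x j.succ)))
    else 0

namespace Fin

lemma le_pred_of_castSucc_lt {n : ℕ} {i : Fin (n + 1)} {j : Fin n} (h : j.castSucc < i) :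
    j ≤ i.pred (ne_zero_of_lt h) :=
  (le_pred_iff _).2 (castSucc_lt_iff_succ_le.1 h)

theorem sum_sum_neg_one_pow_smul_eq_zero {A : Type*} [AddCommGroup A] {n : ℕ}
    (T : Fin (n + 1) → Fin n → A)
    (hT : ∀ i j (h : j.castSucc < i), T i j = T j.castSucc (i.pred (ne_zero_of_lt h))) :
    ∑ i : Fin (n + 1), ∑ j : Fin n, (-1 : ℤ) ^ ((i : ℕ) + (j : ℕ)) • T i j = 0 := by
  rw [← Finset.sum_product', Finset.univ_product_univ,
    ← Finset.sum_filter_add_sum_filter_not _ (fun p => p.2.castSucc < p.1),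
    add_eq_zero_iff_eq_neg, ← Finset.sum_neg_distrib]
  refine Finset.sum_bij'
    (fun p hp => (p.2.castSucc, p.1.pred (ne_zero_of_lt (Finset.mem_filter.1 hp).2)))
    (fun p hp => (p.2.succ,
      p.1.castLT (Nat.lt_of_le_of_lt (Fin.not_lt.1 (Finset.mem_filter.1 hp).2) p.2.isLt)))
    ?_ ?_ ?_ ?_ ?_
  · rintro ⟨i, j⟩ h
    simp only [Finset.mem_filter_univ, castSucc_le_castSucc_iff, not_lt] at h ⊢
    exact le_pred_of_castSucc_lt h
  · rintro ⟨i, j⟩ h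
    simp only [Finset.mem_filter_univ, not_lt] at h ⊢
    simpa [castSucc_castLT] using le_castSucc_iff.1 h
  · rintro ⟨i, j⟩ -
    simp
  · rintro ⟨i, j⟩ -
    simp
  · rintro ⟨i, j⟩ h
    rw [Finset.mem_filter_univ] at h
    obtain ⟨i, rfl⟩ := exists_succ_eq.2 (ne_zero_of_lt h)
    rw [hT _ j h, ← neg_smul]
    simp only [val_succ, val_castSucc, pred_succ]
    rw [add_right_comm, pow_succ, mul_neg_one, add_comm (i : ℕ)]

variable {m : ℕ} {I : Fin (m + 2)} {J : Fin (m + 1)}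

lemma succAbove_succAbove_of_castSucc_lt (h : J.castSucc < I) (k : Fin m) :
    I.succAbove (J.succAbove k) =
      J.castSucc.succAbove ((I.pred (ne_zero_of_lt h)).succAbove k) := by
  rw [← succAbove_succAbove_succAbove_predAbove, succAbove_of_castSucc_lt _ _ h,
    predAbove_of_castSucc_lt _ _ h]

lemma succAbove_pred_lt_iff (h : J.castSucc < I) (k : Fin m) :
    (I.pred (ne_zero_of_lt h)).succAbove k < J ↔ k.castSucc < J := by
  simp only [lt_def, succAbove, val_castSucc, val_pred, apply_ite Fin.val, val_succ] at h ⊢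
  split_ifs <;> omega

lemma castSucc_succAbove_lt_iff (h : J.castSucc < I) (k : Fin m) :
    (J.succAbove k).castSucc < I ↔ k.castSucc < I.pred (ne_zero_of_lt h) := by
  simp only [lt_def, succAbove, val_castSucc, val_pred, apply_ite Fin.val, val_succ] at h ⊢
  split_ifs <;> omega

lemma removeNth_removeNth_of_castSucc_lt {α : Type*} (h : J.castSucc < I) (x : Fin (m + 2) → α) :
    J.removeNth (I.removeNth x) = (I.pred (ne_zero_of_lt h)).removeNth (J.castSucc.removeNth x) := by
  rw [removeNth_removeNth_eq_swap, predAbove_of_castSucc_lt _ _ h, succAbove_of_castSucc_lt _ _ h]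

end Fin

section

variable {X : Type*} (op : X → X → X) (f : X → X)

def fQuandleFace {m : ℕ} (i : Fin (m + 1)) (x : Fin (m + 1) → X) : Fin m → X :=
  fun k => if k.castSucc < i then op (x (i.succAbove k)) (x i) else f (x (i.succAbove k))

lemma fQuandleFace_eq_ite_val_lt {m : ℕ} (i : Fin (m + 1)) (x : Fin (m + 1) → X) :
    fQuandleFace op f i x = fun j : Fin m =>
      if (j : ℕ) < (i : ℕ) then op (x (Fin.castSucc j)) (x i) else f (x j.succ) := by
  ext k
  change _ = if k.castSucc < i then _ else _
  unfold fQuandleFace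
  split_ifs with h
  · rw [Fin.succAbove_of_castSucc_lt _ _ h]
  · rw [Fin.succAbove_of_le_castSucc _ _ (Fin.not_lt.1 h)]

variable {m : ℕ} {I : Fin (m + 2)} {J : Fin (m + 1)}

lemma fQuandleFace_removeNth_of_castSucc_lt (h : J.castSucc < I) (x : Fin (m + 2) → X) :
    fQuandleFace op f J (I.removeNth x) =
      (I.pred (Fin.ne_zero_of_lt h)).removeNth (fQuandleFace op f J.castSucc x) := by
  ext k
  simp only [fQuandleFace, Fin.removeNth, Fin.succAbove_of_castSucc_lt _ _ h,
    Fin.succAbove_succAbove_of_castSucc_lt h, Fin.castSucc_lt_castSucc_iff,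
    Fin.succAbove_pred_lt_iff h]

lemma removeNth_fQuandleFace_of_castSucc_lt (h : J.castSucc < I) (x : Fin (m + 2) → X) :
    J.removeNth (fQuandleFace op f I x) =
      fQuandleFace op f (I.pred (Fin.ne_zero_of_lt h)) (J.castSucc.removeNth x) := by
  ext k
  simp only [fQuandleFace, Fin.removeNth, Fin.succAbove_pred_of_lt _ _ h,
    Fin.succAbove_succAbove_of_castSucc_lt h, Fin.castSucc_succAbove_lt_iff h]

lemma fQuandleFace_fQuandleFace_of_castSucc_lt
    (h1 : ∀ x y z : X, op (op x y) (f z) = op (op x z) (op y z))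
    (hf : ∀ a b : X, f (op a b) = op (f a) (f b)) (h : J.castSucc < I) (x : Fin (m + 2) → X) :
    fQuandleFace op f J (fQuandleFace op f I x) =
      fQuandleFace op f (I.pred (Fin.ne_zero_of_lt h)) (fQuandleFace op f J.castSucc x) := by
  ext k
  simp only [fQuandleFace, Fin.succAbove_of_castSucc_lt _ _ h, Fin.succAbove_pred_of_lt _ _ h,
    Fin.succAbove_succAbove_of_castSucc_lt h, Fin.castSucc_succAbove_lt_iff h,
    Fin.castSucc_lt_castSucc_iff, Fin.succAbove_pred_lt_iff h, h, if_true]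
  have hJI := Fin.le_pred_of_castSucc_lt h
  by_cases hkJ : k.castSucc < J
  · simp only [hkJ, Fin.lt_of_lt_of_le hkJ hJI, Fin.not_lt.2 hJI, if_true, if_false, h1]
  · by_cases hkI : k.castSucc < I.pred (Fin.ne_zero_of_lt h)
    · simp only [hkJ, hkI, Fin.not_lt.2 hJI, if_true, if_false, hf]
    · simp only [hkJ, hkI, if_false]

end

lemma fQuandleDelta_apply {X A : Type*} [AddCommGroup A] (op : X → X → X) (f : X → X) {m : ℕ}
    (φ : (Fin m → X) → A) (x : Fin (m + 1) → X) :
    fQuandleDelta op f m φ x = ∑ i : Fin m,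
      (-1 : ℤ) ^ (i : ℕ) • (φ (i.succ.removeNth x) - φ (fQuandleFace op f i.succ x)) := by
  simp [fQuandleDelta, Fin.sum_univ_succ, fQuandleFace_eq_ite_val_lt, pow_succ]

lemma fQuandle_apply_op {X : Type*} {op : X → X → X} {f : X → X}
    (h1 : ∀ x y z : X, op (op x y) (f z) = op (op x z) (op y z)) (h3 : ∀ x : X, op x x = f x)
    (a b : X) : f (op a b) = op (f a) (f b) := by
  simpa only [h3] using (h1 a a b).symm

theorem fQuandleDelta_comp_zero_general
    {X A : Type*} [AddCommGroup A] (op : X → X → X) (f : X → X)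
    (h1 : ∀ x y z : X, op (op x y) (f z) = op (op x z) (op y z))
    (h3 : ∀ x : X, op x x = f x)
    (n : ℕ) (φ : (Fin n → X) → A) :
    fQuandleDelta op f (n + 1) (fQuandleDelta op f n φ) = 0 := by
  funext x
  simp only [fQuandleDelta_apply, ← Finset.sum_sub_distrib, ← smul_sub, Finset.smul_sum,
    smul_smul, ← pow_add, Pi.zero_apply]
  refine Fin.sum_sum_neg_one_pow_smul_eq_zero _ fun i j h => ?_
  have h' : j.succ.castSucc < i.succ := by simpa using h
  rw [Fin.removeNth_removeNth_of_castSucc_lt h', fQuandleFace_removeNth_of_castSucc_lt op f h',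
    removeNth_fQuandleFace_of_castSucc_lt op f h',
    fQuandleFace_fQuandleFace_of_castSucc_lt op f h1 (fQuandle_apply_op h1 h3) h']
  simp only [Fin.pred_succ, Fin.succ_pred, Fin.succ_castSucc]
  abel

/-- For an f-quandle `(X, *, f)` and an abelian group `A`, the operators
`δ^n` satisfy `δ^{n+1} ∘ δ^n = 0` for all `n ≥ 1`, so `(C^•(X, A), δ^•)` is a cochain
complex. -/
theorem fQuandleDelta_comp_zero
    {X A : Type*} [AddCommGroup A] (op : X → X → X) (f : X → X)
    (h1 : ∀ x y z : X, op (op x y) (f z) = op (op x z) (op y z))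
    (h2 : ∀ x y : X, ∃! z : X, op z y = f x)
    (h3 : ∀ x : X, op x x = f x)
    (n : ℕ) (hn : 1 ≤ n) (φ : (Fin n → X) → A) :
    fQuandleDelta op f (n + 1) (fQuandleDelta op f n φ) = 0 :=
  fQuandleDelta_comp_zero_general op f h1 h3 n φ
end
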